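/- arXiv:2506.02685 — 3 statements merged into one kernel-verified Lean document; each statement's English description precedes it below -/
import Mathlib

section
/- Let G be a simple graph on a finite vertex type V, let u ≠ v be vertices that are not adjacent in G, and let G' be the graph obtained from G by adding the edge {u, v}. Let Orb_G(u, v) = {(π(u), π(v)) : π ∈ Aut(G)} and Orb_{G'}(u, v) = {(π(u), π(v)) : π ∈ Aut(G')} be the orbits of the ordered pair (u, v) under the respective automorphism groups. Then |Orb_G(u, v)| · |Aut(G')| = |Orb_{G'}(u, v)| · |Aut(G)|. -/
open MulAction

private theorem orb_mul_stab_aux {V : Type*} (G : SimpleGraph V) (u v : V) :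
    Nat.card {p : V × V | ∃ π : G ≃g G, (π u, π v) = p} *
      Nat.card {π : G ≃g G // π u = u ∧ π v = v} = Nat.card (G ≃g G) := by
  letI : SMul (G ≃g G) (V × V) := ⟨fun π p => (π p.1, π p.2)⟩
  letI : MulAction (G ≃g G) (V × V) :=
    { one_smul := fun p => rfl, mul_smul := fun π σ p => rfl }
  have h := Nat.card_congr (MulAction.orbitProdStabilizerEquivGroup (G ≃g G) (u, v))
  rw [Nat.card_prod] at h
  rw [← h]
  congr 1
  refine Nat.card_congr (Equiv.subtypeEquivRight fun π => ?_)
  rw [MulAction.mem_stabilizer_iff]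
  constructor
  · rintro ⟨h1, h2⟩
    show (π u, π v) = (u, v)
    rw [h1, h2]
  · intro h
    exact ⟨congrArg Prod.fst h, congrArg Prod.snd h⟩

private theorem fix_iff_aux {V : Type*} (e : V ≃ V) {u : V} (hu : e u = u) (x : V) :
    e x = u ↔ x = u :=
  ⟨fun h => e.injective (by rw [h, hu]), fun h => by rw [h, hu]⟩

private theorem sup_adj_iff_aux {V : Type*} (G : SimpleGraph V) {u v : V} (e : V ≃ V)
    (hu : e u = u) (hv : e v = v) (hG : ∀ a b, G.Adj (e a) (e b) ↔ G.Adj a b) (a b : V) :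
    (G ⊔ SimpleGraph.fromEdgeSet {s(u, v)}).Adj (e a) (e b) ↔
      (G ⊔ SimpleGraph.fromEdgeSet {s(u, v)}).Adj a b := by
  simp only [SimpleGraph.sup_adj, SimpleGraph.fromEdgeSet_adj, Set.mem_singleton_iff,
    Sym2.eq_iff, hG, ne_eq, e.injective.eq_iff, fix_iff_aux e hu, fix_iff_aux e hv]

private theorem base_adj_iff_aux {V : Type*} (G : SimpleGraph V) {u v : V} (huv : u ≠ v)
    (hadj : ¬ G.Adj u v) (e : V ≃ V) (hu : e u = u) (hv : e v = v)
    (hG : ∀ a b, (G ⊔ SimpleGraph.fromEdgeSet {s(u, v)}).Adj (e a) (e b) ↔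
      (G ⊔ SimpleGraph.fromEdgeSet {s(u, v)}).Adj a b) (a b : V) :
    G.Adj (e a) (e b) ↔ G.Adj a b := by
  have hchar : ∀ a b : V, G.Adj a b ↔
      ((G ⊔ SimpleGraph.fromEdgeSet {s(u, v)}).Adj a b ∧
        ¬ (a = u ∧ b = v ∨ a = v ∧ b = u)) := by
    intro a b
    simp only [SimpleGraph.sup_adj, SimpleGraph.fromEdgeSet_adj, Set.mem_singleton_iff,
      Sym2.eq_iff, ne_eq]
    constructor
    · intro h
      refine ⟨Or.inl h, ?_⟩
      rintro (⟨rfl, rfl⟩ | ⟨rfl, rfl⟩)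
      · exact hadj h
      · exact hadj h.symm
    · rintro ⟨(h | ⟨h1, h2⟩), h3⟩
      · exact h
      · exact absurd h1 h3
  rw [hchar a b, hchar (e a) (e b), hG, fix_iff_aux e hu, fix_iff_aux e hv,
    fix_iff_aux e hu, fix_iff_aux e hv]

private noncomputable def stabEquiv_aux {V : Type*} (G : SimpleGraph V) (u v : V)
    (huv : u ≠ v) (hadj : ¬ G.Adj u v) :
    {π : G ≃g G // π u = u ∧ π v = v} ≃
      {π : (G ⊔ SimpleGraph.fromEdgeSet {s(u, v)}) ≃g
        (G ⊔ SimpleGraph.fromEdgeSet {s(u, v)}) // π u = u ∧ π v = v} where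
  toFun π := ⟨⟨π.1.toEquiv, fun {a b} =>
    sup_adj_iff_aux G π.1.toEquiv π.2.1 π.2.2 (fun a b => π.1.map_adj_iff) a b⟩, π.2⟩
  invFun π := ⟨⟨π.1.toEquiv, fun {a b} =>
    base_adj_iff_aux G huv hadj π.1.toEquiv π.2.1 π.2.2 (fun a b => π.1.map_adj_iff) a b⟩, π.2⟩
  left_inv π := rfl
  right_inv π := rfl



/-- For `u ≠ v` non-adjacent in `G` on a finite vertex type, with
`G'` obtained by adding the edge `{u, v}`,
`|Orb_G(u,v)| * |Aut(G')| = |Orb_{G'}(u,v)| * |Aut(G)|`, where the orbits of the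
ordered pair `(u, v)` are taken under the diagonal action of the respective
automorphism groups. -/
theorem orb_mul_aut_eq_orb_mul_aut_addEdge {V : Type*} [Fintype V]
    (G : SimpleGraph V) (u v : V) (huv : u ≠ v) (hadj : ¬ G.Adj u v) :
    Nat.card {p : V × V | ∃ π : G ≃g G, (π u, π v) = p} *
      Nat.card ((G ⊔ SimpleGraph.fromEdgeSet {s(u, v)}) ≃g
        (G ⊔ SimpleGraph.fromEdgeSet {s(u, v)})) =
    Nat.card {p : V × V | ∃ π : (G ⊔ SimpleGraph.fromEdgeSet {s(u, v)}) ≃g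
        (G ⊔ SimpleGraph.fromEdgeSet {s(u, v)}), (π u, π v) = p} *
      Nat.card (G ≃g G) := by
  rw [← orb_mul_stab_aux G u v,
    ← orb_mul_stab_aux (G ⊔ SimpleGraph.fromEdgeSet {s(u, v)}) u v,
    Nat.card_congr (stabEquiv_aux G u v huv hadj)]
  ring
end

section
/- Let G be a simple graph on a finite vertex type V and let u be a vertex. Let G' be the simple graph on Option V (V extended by one new vertex ⋆) whose edges are the edges of G together with the single new edge {⋆, u}. Let Orb_G(u) = {π(u) : π ∈ Aut(G)} be the orbit of u under Aut(G), and let Orb_{G'}(⋆) = {σ(⋆) : σ ∈ Aut(G')} be the orbit of the new vertex ⋆ under Aut(G'). Then |Orb_G(u)| · |Aut(G')| = |Orb_{G'}(⋆)| · |Aut(G)|. -/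
/-!
Orbit–stabilizer turns both sides into `|Orb_G(u)| · |Orb_{G'}(⋆)| · |Stab|`, once the
stabilizer of `⋆` in `Aut(G')` is identified with the stabilizer of `u` in `Aut(G)`: an
automorphism of `G'` fixing `⋆` fixes its only neighbour `u` and restricts to `V`, and an
automorphism of `G` fixing `u` extends to `G'` by fixing `⋆`.
-/

/-- The graph on `Option V` obtained from `G` by attaching a new pendant vertex
`⋆ = none` to the existing vertex `w`: its edges are the edges of `G`
(transported along `some`) together with the single new edge `{⋆, w}`. -/
def SimpleGraph.attachPendant {V : Type*} (G : SimpleGraph V) (w : V) :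
    SimpleGraph (Option V) :=
  SimpleGraph.fromEdgeSet ((Sym2.map some) '' G.edgeSet ∪ {s((none : Option V), some w)})

theorem Equiv.some_removeNone_of_apply_none {α β : Type*} (e : Option α ≃ Option β)
    (h : e none = none) (a : α) : some (e.removeNone a) = e (some a) :=
  removeNone_some e <| Option.ne_none_iff_exists'.mp fun ha =>
    Option.some_ne_none a (e.injective (ha.trans h.symm))

theorem MulAction.card_orbit_mul_card_eq_of_stabilizer_equiv {G H α β : Type*} [Group G]
    [Group H] [MulAction G α] [MulAction H β] {a : α} {b : β}
    (e : stabilizer H b ≃ stabilizer G a) :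
    Nat.card (orbit G a) * Nat.card H = Nat.card (orbit H b) * Nat.card G := by
  rw [← Nat.card_congr (orbitProdStabilizerEquivGroup G a),
    ← Nat.card_congr (orbitProdStabilizerEquivGroup H b), Nat.card_prod, Nat.card_prod,
    Nat.card_congr e]
  ring

namespace SimpleGraph

variable {V : Type*} {G : SimpleGraph V} {w : V}

@[simp] lemma attachPendant_adj_some_some {a b : V} :
    (G.attachPendant w).Adj (some a) (some b) ↔ G.Adj a b := by
  simp only [attachPendant, fromEdgeSet_adj, Set.mem_union, ← Sym2.map_mk,
    (Sym2.map.injective (Option.some_injective V)).mem_set_image]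
  simp +contextual [G.ne_of_adj]

@[simp] lemma attachPendant_adj_none_left {y : Option V} :
    (G.attachPendant w).Adj none y ↔ y = some w := by
  have h (e : Sym2 V) : Sym2.map some e ≠ s(none, y) := fun he => by
    simpa using (he ▸ Sym2.mem_mk_left none y : none ∈ Sym2.map some e)
  simp +contextual [attachPendant, h]

@[simp] lemma attachPendant_adj_none_right {x : Option V} :
    (G.attachPendant w).Adj x none ↔ x = some w := by
  rw [adj_comm, attachPendant_adj_none_left]

def Iso.optionCongrOfApplyEq (π : G ≃g G) (h : π w = w) :
    G.attachPendant w ≃g G.attachPendant w where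
  toEquiv := π.toEquiv.optionCongr
  map_rel_iff' := by
    have apply_eq_w_iff (b : V) : π b = w ↔ b = w := by
      simpa [h] using π.injective.eq_iff (a := b) (b := w)
    rintro (_ | a) (_ | b) <;> simp [apply_eq_w_iff, Iso.map_adj_iff]

def Iso.removeNoneOfApplyNone (σ : G.attachPendant w ≃g G.attachPendant w)
    (h : σ none = none) : G ≃g G where
  toEquiv := σ.toEquiv.removeNone
  map_rel_iff' {a b} := by
    rw [← attachPendant_adj_some_some (w := w), ← attachPendant_adj_some_some (w := w)]
    simp only [Equiv.some_removeNone_of_apply_none σ.toEquiv h]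
    exact σ.map_rel_iff

@[simp] lemma Iso.some_removeNoneOfApplyNone_apply
    (σ : G.attachPendant w ≃g G.attachPendant w) (h : σ none = none) (a : V) :
    some (σ.removeNoneOfApplyNone h a) = σ (some a) :=
  Equiv.some_removeNone_of_apply_none σ.toEquiv h a

lemma Iso.removeNoneOfApplyNone_apply_self (σ : G.attachPendant w ≃g G.attachPendant w)
    (h : σ none = none) : σ.removeNoneOfApplyNone h w = w := by
  have hadj := σ.map_rel_iff.mpr (attachPendant_adj_none_left.mpr rfl :
    (G.attachPendant w).Adj none (some w))
  rw [h, ← σ.some_removeNoneOfApplyNone_apply h, attachPendant_adj_none_left] at hadj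
  exact Option.some_injective _ hadj

noncomputable def stabilizerAttachPendantEquiv :
    MulAction.stabilizer (G.attachPendant w ≃g G.attachPendant w) (none : Option V) ≃
      MulAction.stabilizer (G ≃g G) w where
  toFun σ := ⟨σ.1.removeNoneOfApplyNone σ.2, σ.1.removeNoneOfApplyNone_apply_self σ.2⟩
  invFun π := ⟨π.1.optionCongrOfApplyEq π.2, rfl⟩
  left_inv σ := by
    refine Subtype.ext <| RelIso.ext ?_
    rintro (_ | a)
    · exact σ.2.symm
    · exact σ.1.some_removeNoneOfApplyNone_apply σ.2 a
  right_inv π := Subtype.ext <| RelIso.ext <|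
    Equiv.ext_iff.mp (Equiv.removeNone_optionCongr π.1.toEquiv)

end SimpleGraph

theorem orb_mul_aut_eq_orb_mul_aut_attachPendant_general {V : Type*}
    (G : SimpleGraph V) (u : V) :
    Nat.card {x : V | ∃ π : G ≃g G, π u = x} *
      Nat.card (G.attachPendant u ≃g G.attachPendant u) =
    Nat.card {y : Option V | ∃ σ : G.attachPendant u ≃g G.attachPendant u,
        σ (none : Option V) = y} *
      Nat.card (G ≃g G) :=
  -- both sets are `MulAction.orbit`s for the tautological action `RelIso.applyMulAction`
  MulAction.card_orbit_mul_card_eq_of_stabilizer_equiv SimpleGraph.stabilizerAttachPendantEquiv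

/-- With `G'` the pendant-attached graph,
`|Orb_G(u)| * |Aut(G')| = |Orb_{G'}(⋆)| * |Aut(G)|`. -/
theorem orb_mul_aut_eq_orb_mul_aut_attachPendant {V : Type*} [Fintype V]
    (G : SimpleGraph V) (u : V) :
    Nat.card {x : V | ∃ π : G ≃g G, π u = x} *
      Nat.card (G.attachPendant u ≃g G.attachPendant u) =
    Nat.card {y : Option V | ∃ σ : G.attachPendant u ≃g G.attachPendant u,
        σ (none : Option V) = y} *
      Nat.card (G ≃g G) :=
  orb_mul_aut_eq_orb_mul_aut_attachPendant_general G u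
end

section
/- Let G be a simple graph on a finite vertex type V and C a simple graph on a finite vertex type W, and let G ⊔ C denote their disjoint union on the sum type V ⊕ W. Let Orb(G ⊔ C, W) = {σ(S_W) : σ ∈ Aut(G ⊔ C)} denote the orbit of the W-side vertex set S_W under the setwise action of Aut(G ⊔ C) on vertex sets. Then |Orb(G ⊔ C, W)| · |Aut(G)| · |Aut(C)| = |Aut(G ⊔ C)|. -/
/-!
An automorphism of `G ⊕g C` fixing the `W`-side setwise also fixes the `V`-side, so it is
`π ⊕ τ` with `π ∈ Aut(G)` and `τ ∈ Aut(C)`. Hence the stabilizer of `S_W` is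
`Aut(G) × Aut(C)`, and the orbit–stabilizer theorem gives the count.
-/

/-- The automorphism group of a simple graph `G`, as a subgroup of the
permutation group of its vertex type. -/
def SimpleGraph.autGroup {V : Type*} (G : SimpleGraph V) : Subgroup (Equiv.Perm V) where
  carrier := {π | ∀ a b, G.Adj (π a) (π b) ↔ G.Adj a b}
  one_mem' := fun _ _ => Iff.rfl
  mul_mem' := by
    intro π σ hπ hσ a b
    simpa [Equiv.Perm.mul_apply] using (hπ (σ a) (σ b)).trans (hσ a b)
  inv_mem' := by
    intro π hπ a b
    conv_rhs => rw [← π.apply_symm_apply a, ← π.apply_symm_apply b]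
    exact (hπ _ _).symm

namespace Equiv.Perm

open Pointwise MulAction

theorem stabilizer_range_inr {α β : Type*} [Finite α] [Finite β] :
    stabilizer (Perm (α ⊕ β)) (Set.range (Sum.inr : β → α ⊕ β)) =
      (sumCongrHom α β).range := by
  ext σ
  constructor
  · intro hσ
    have hinr : σ '' Set.range Sum.inr = Set.range Sum.inr := hσ
    have hinl : σ '' Set.range Sum.inl = Set.range Sum.inl := by
      rw [← Set.compl_range_inr, Set.image_compl_eq σ.bijective, hinr]
    exact mem_sumCongrHom_range_of_perm_mapsTo_inl (Set.mapsTo_iff_image_subset.2 hinl.subset)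
  · rintro ⟨⟨π, τ⟩, rfl⟩
    show sumCongr π τ '' Set.range Sum.inr = Set.range Sum.inr
    rw [← Set.range_comp, show ⇑(sumCongr π τ) ∘ Sum.inr = Sum.inr ∘ τ from rfl,
      Set.range_comp, τ.range_eq_univ, Set.image_univ]

end Equiv.Perm

namespace SimpleGraph

open Pointwise MulAction

variable {V W : Type*} (G : SimpleGraph V) (C : SimpleGraph W)

theorem sumCongr_mem_autGroup_sum_iff {π : Equiv.Perm V} {τ : Equiv.Perm W} :
    Equiv.sumCongr π τ ∈ (G ⊕g C).autGroup ↔ π ∈ G.autGroup ∧ τ ∈ C.autGroup := by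
  constructor
  · intro h
    exact ⟨fun a b => by simpa using h (.inl a) (.inl b),
      fun a b => by simpa using h (.inr a) (.inr b)⟩
  · rintro ⟨hπ, hτ⟩ (a | a) (b | b) <;> simp [hπ _, hτ _]

def autGroupProdToSum : G.autGroup × C.autGroup →* (G ⊕g C).autGroup :=
  ((Equiv.Perm.sumCongrHom V W).comp (G.autGroup.subtype.prodMap C.autGroup.subtype)).codRestrict
    _ fun p => (sumCongr_mem_autGroup_sum_iff G C).2 ⟨p.1.2, p.2.2⟩

theorem autGroupProdToSum_injective : Function.Injective (autGroupProdToSum G C) := by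
  intro p q h
  have := Equiv.Perm.sumCongrHom_injective (congrArg Subtype.val h)
  exact Prod.ext (Subtype.ext (congrArg Prod.fst this)) (Subtype.ext (congrArg Prod.snd this))

theorem range_autGroupProdToSum [Finite V] [Finite W] :
    (autGroupProdToSum G C).range =
      stabilizer (G ⊕g C).autGroup (Set.range (Sum.inr : W → V ⊕ W)) := by
  ext ⟨σ, hσ⟩
  rw [mem_stabilizer_iff, Subgroup.mk_smul, ← mem_stabilizer_iff,
    Equiv.Perm.stabilizer_range_inr, MonoidHom.mem_range, MonoidHom.mem_range]
  constructor
  · rintro ⟨p, hp⟩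
    exact ⟨(p.1.1, p.2.1), congrArg Subtype.val hp⟩
  · rintro ⟨⟨π, τ⟩, rfl⟩
    obtain ⟨hπ, hτ⟩ := (sumCongr_mem_autGroup_sum_iff G C).1 hσ
    exact ⟨(⟨π, hπ⟩, ⟨τ, hτ⟩), rfl⟩

theorem card_stabilizer_range_inr [Finite V] [Finite W] :
    Nat.card (stabilizer (G ⊕g C).autGroup (Set.range (Sum.inr : W → V ⊕ W))) =
      Nat.card G.autGroup * Nat.card C.autGroup := by
  rw [← range_autGroupProdToSum, ← Nat.card_prod]
  exact Nat.card_congr (MonoidHom.ofInjective (autGroupProdToSum_injective G C)).toEquiv.symm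

end SimpleGraph

open Pointwise MulAction in
/-- With `S_W` the `W`-side vertex set of the disjoint union
`G ⊕g C`, the orbit of `S_W` under the setwise action of `Aut(G ⊕g C)`
satisfies `|Orb(G ⊕g C, W)| * |Aut(G)| * |Aut(C)| = |Aut(G ⊕g C)|`. -/
theorem card_orb_mul_aut_mul_aut_eq_aut_sum {V W : Type*} [Fintype V] [Fintype W]
    (G : SimpleGraph V) (C : SimpleGraph W) :
    Nat.card {S : Set (V ⊕ W) | ∃ σ ∈ (G ⊕g C).autGroup,
        σ '' Set.range (Sum.inr : W → V ⊕ W) = S} *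
      Nat.card G.autGroup * Nat.card C.autGroup =
    Nat.card (G ⊕g C).autGroup := by
  have horbit : {S : Set (V ⊕ W) | ∃ σ ∈ (G ⊕g C).autGroup, σ '' Set.range Sum.inr = S} =
      orbit (G ⊕g C).autGroup (Set.range Sum.inr) := by
    ext S
    exact ⟨fun ⟨σ, hσ, hS⟩ => ⟨⟨σ, hσ⟩, hS⟩, fun ⟨σ, hS⟩ => ⟨σ, σ.2, hS⟩⟩
  rw [horbit, mul_assoc, ← G.card_stabilizer_range_inr C, ← Nat.card_prod]
  exact Nat.card_congr (orbitProdStabilizerEquivGroup _ _)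
end
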